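/- Let τ₁, τ₂, τ'₁, τ'₂ ∈ PGL₂(k). Then τ'₂⁻¹τ'₁ is conjugate to τ₂⁻¹τ₁ in PGL₂(k) if and only if there exist μ₁, μ₂ ∈ PGL₂(k) such that (μ₁ × μ₂)(C_{τ'ᵢ}) = C_{τᵢ} for i = 1, 2. -/
import Mathlib


/-- The projective line `ℙ¹` over `k`, as the projectivization of `k²`. -/
abbrev ProjLine (k : Type*) [Field k] := Projectivization k (Fin 2 → k)

/-- The projective linear automorphism of `ℙ¹` induced by `τ ∈ GL₂(k)`. -/
noncomputable def act {k : Type*} [Field k] (τ : (Fin 2 → k) ≃ₗ[k] (Fin 2 → k)) :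
    ProjLine k → ProjLine k :=
  Projectivization.map τ.toLinearMap τ.injective

/-- The graph `C_τ = {(p, τ(p)) : p ∈ ℙ¹} ⊆ ℙ¹ × ℙ¹` of `τ`. -/
noncomputable def graph {k : Type*} [Field k] (τ : (Fin 2 → k) ≃ₗ[k] (Fin 2 → k)) :
    Set (ProjLine k × ProjLine k) :=
  {pq | pq.2 = act τ pq.1}

/-- `τ₁` and `τ₂` define the same element of `PGL₂(k)`, i.e. they agree up to a
nonzero scalar. -/
def PGLEq {k : Type*} [Field k] (τ₁ τ₂ : (Fin 2 → k) ≃ₗ[k] (Fin 2 → k)) : Prop :=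
  ∃ c : k, c ≠ 0 ∧ ∀ v, τ₁ v = c • τ₂ v

section Aux

variable {k : Type*} [Field k]

lemma act_mk (τ : (Fin 2 → k) ≃ₗ[k] (Fin 2 → k)) (v : Fin 2 → k) (hv : v ≠ 0) :
    act τ (Projectivization.mk k v hv) =
      Projectivization.mk k (τ v) (by simp [hv]) :=
  Projectivization.map_mk τ.toLinearMap τ.injective v hv

/-- If two linear automorphisms agree on projective space, they agree up to a
nonzero scalar. -/
lemma act_eq_iff (σ τ : (Fin 2 → k) ≃ₗ[k] (Fin 2 → k)) :
    (∀ p, act σ p = act τ p) ↔ PGLEq σ τ := by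
  constructor
  · intro h
    have h1 : ∀ v : Fin 2 → k, v ≠ 0 → ∃ a : k, σ v = a • τ v := by
      intro v hv
      have := h (Projectivization.mk k v hv)
      rw [act_mk, act_mk, Projectivization.mk_eq_mk_iff'] at this
      obtain ⟨a, ha⟩ := this
      exact ⟨a, ha.symm⟩
    choose f hf using fun v => fun hv => h1 v hv
    -- key: f is constant on nonzero vectors
    have key : ∀ (v w : Fin 2 → k) (hv : v ≠ 0) (hw : w ≠ 0), f v hv = f w hw := by
      intro v w hv hw
      by_cases hdep : ∃ a : k, w = a • v
      · obtain ⟨a, rfl⟩ := hdep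
        have ha : a ≠ 0 := by rintro rfl; simp at hw
        have e1 : σ (a • v) = f (a • v) hw • τ (a • v) := hf _ hw
        have e2 : σ (a • v) = f v hv • τ (a • v) := by
          rw [map_smul, map_smul, hf v hv, smul_comm]
        have : (f (a • v) hw - f v hv) • τ (a • v) = 0 := by
          rw [sub_smul, ← e1, ← e2, sub_self]
        have hτ : τ (a • v) ≠ 0 := fun h0 => hw (by simpa using τ.map_eq_zero_iff.mp h0)
        have := sub_eq_zero.mp ((smul_eq_zero.mp this).resolve_right hτ)
        exact this.symm ▸ rfl
      · have hvw : v + w ≠ 0 := by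
          intro h0
          exact hdep ⟨-1, by rw [neg_one_smul, eq_neg_of_add_eq_zero_right h0]⟩
        have e2 : f v hv • τ v + f w hw • τ w = f (v + w) hvw • (τ v + τ w) := by
          have h0 := hf (v + w) hvw
          rw [map_add, map_add, hf v hv, hf w hw] at h0
          exact h0
        have e3 : (f (v + w) hvw - f v hv) • v + (f (v + w) hvw - f w hw) • w = 0 := by
          apply τ.injective
          rw [map_add, map_smul, map_smul, map_zero]
          rw [sub_smul, sub_smul]
          linear_combination (norm := module) e2.symm
        have hw0 : f (v + w) hvw - f w hw = 0 := by
          by_contra hne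
          apply hdep
          refine ⟨(f (v + w) hvw - f w hw)⁻¹ * (f v hv - f (v + w) hvw), ?_⟩
          have h4 : (f (v + w) hvw - f w hw) • w = (f v hv - f (v + w) hvw) • v := by
            linear_combination (norm := module) e3
          rw [mul_smul, ← h4, smul_smul, inv_mul_cancel₀ hne, one_smul]
        have hv0 : f (v + w) hvw - f v hv = 0 := by
          rw [hw0, zero_smul, add_zero, smul_eq_zero] at e3
          exact e3.resolve_right hv
        rw [sub_eq_zero] at hw0 hv0
        rw [← hv0, ← hw0]
    have hone : (fun _ => (1 : k) : Fin 2 → k) ≠ 0 := by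
      intro h0
      have := congrFun h0 0
      simp at this
    refine ⟨f _ hone, ?_, ?_⟩
    · intro hc
      have := hf _ hone
      rw [hc, zero_smul] at this
      exact (by simp [hone] : σ (fun _ => (1:k)) ≠ 0) this
    · intro v
      by_cases hv : v = 0
      · simp [hv]
      · rw [hf v hv, key v _ hv hone]
  · rintro ⟨c, hc, hcv⟩ p
    induction p using Projectivization.ind with
    | h v hv =>
      rw [act_mk, act_mk, Projectivization.mk_eq_mk_iff']
      exact ⟨c, (hcv v).symm⟩

lemma graph_image_iff (μ₁ μ₂ τ' τ : (Fin 2 → k) ≃ₗ[k] (Fin 2 → k)) :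
    Prod.map (act μ₁) (act μ₂) '' graph τ' = graph τ ↔
      ∀ p, act μ₂ (act τ' p) = act τ (act μ₁ p) := by
  constructor
  · intro h p
    have hmem : (p, act τ' p) ∈ graph τ' := rfl
    have : (act μ₁ p, act μ₂ (act τ' p)) ∈ graph τ := by
      rw [← h]
      exact ⟨(p, act τ' p), hmem, rfl⟩
    exact this
  · intro h
    ext ⟨a, b⟩
    constructor
    · rintro ⟨⟨p, q⟩, hpq, heq⟩
      have hq : q = act τ' p := hpq
      obtain ⟨h1, h2⟩ := Prod.mk.injEq .. ▸ heq
      show b = act τ a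
      rw [← h1, ← h2, hq, h p]
    · intro hb
      -- a = act μ₁ p for some p
      obtain ⟨v, hv, rfl⟩ : ∃ v hv, a = Projectivization.mk k v hv := by
        induction a using Projectivization.ind with
        | h v hv => exact ⟨v, hv, rfl⟩
      refine ⟨(Projectivization.mk k (μ₁.symm v) (by simp [hv]),
        act τ' (Projectivization.mk k (μ₁.symm v) (by simp [hv]))), rfl, ?_⟩
      have ha : act μ₁ (Projectivization.mk k (μ₁.symm v) (by simp [hv]))
          = Projectivization.mk k v hv := by
        rw [act_mk]
        congr 1
        simp
      have := h (Projectivization.mk k (μ₁.symm v) (by simp [hv]))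
      rw [ha] at this
      show (_, _) = (_, _)
      rw [Prod.mk.injEq]
      exact ⟨ha, by rw [this, ← hb]⟩

end Aux

/-- `τ'₂⁻¹τ'₁` is conjugate to `τ₂⁻¹τ₁` in `PGL₂(k)` iff there exist
`μ₁, μ₂ ∈ PGL₂(k)` such that `(μ₁ × μ₂)(C_{τ'ᵢ}) = C_{τᵢ}` for `i = 1, 2`. -/
theorem stmt13 {k : Type*} [Field k] [IsAlgClosed k] [CharZero k]
    (τ₁ τ₂ τ₁' τ₂' : (Fin 2 → k) ≃ₗ[k] (Fin 2 → k)) :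
    (∃ ν : (Fin 2 → k) ≃ₗ[k] (Fin 2 → k), ∃ c : k, c ≠ 0 ∧
        ∀ v : Fin 2 → k, ν.symm (τ₂'.symm (τ₁' (ν v))) = c • τ₂.symm (τ₁ v)) ↔
      ∃ μ₁ μ₂ : (Fin 2 → k) ≃ₗ[k] (Fin 2 → k),
        Prod.map (act μ₁) (act μ₂) '' graph τ₁' = graph τ₁ ∧
        Prod.map (act μ₁) (act μ₂) '' graph τ₂' = graph τ₂ := by
  constructor
  · rintro ⟨ν, c, hc, h⟩
    refine ⟨ν.symm, τ₂'.symm.trans (ν.symm.trans τ₂), ?_, ?_⟩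
    · rw [graph_image_iff]
      intro p
      induction p using Projectivization.ind with
      | h v hv =>
        rw [act_mk, act_mk, act_mk, act_mk, Projectivization.mk_eq_mk_iff']
        refine ⟨c, ?_⟩
        have := h (ν.symm v)
        simp only [LinearEquiv.apply_symm_apply] at this
        simp only [LinearEquiv.trans_apply]
        rw [this]
        rw [map_smul, LinearEquiv.apply_symm_apply]
    · rw [graph_image_iff]
      intro p
      induction p using Projectivization.ind with
      | h v hv =>
        rw [act_mk, act_mk, act_mk, act_mk]
        congr 1
        simp [LinearEquiv.trans_apply]
  · rintro ⟨μ₁, μ₂, h1, h2⟩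
    rw [graph_image_iff] at h1 h2
    -- translate to scalar statements
    have key : ∀ (τ' τ : (Fin 2 → k) ≃ₗ[k] (Fin 2 → k)),
        (∀ p, act μ₂ (act τ' p) = act τ (act μ₁ p)) →
        ∃ c : k, c ≠ 0 ∧ ∀ v, μ₂ (τ' (μ₁.symm v)) = c • τ v := by
      intro τ' τ h
      have : ∀ p, act (μ₁.symm.trans (τ'.trans μ₂)) p = act τ p := by
        intro p
        induction p using Projectivization.ind with
        | h v hv =>
          have := h (Projectivization.mk k (μ₁.symm v) (by simp [hv]))
          rw [act_mk, act_mk, act_mk] at this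
          have ha : μ₁ (μ₁.symm v) = v := μ₁.apply_symm_apply v
          rw [act_mk, act_mk]
          simp only [LinearEquiv.trans_apply]
          rw [this, act_mk, Projectivization.mk_eq_mk_iff']
          exact ⟨1, by rw [one_smul, ha]⟩
      obtain ⟨c, hc, hcv⟩ := (act_eq_iff _ _).mp this
      exact ⟨c, hc, fun v => hcv v⟩
    obtain ⟨c₁, hc₁, hv₁⟩ := key τ₁' τ₁ h1
    obtain ⟨c₂, hc₂, hv₂⟩ := key τ₂' τ₂ h2
    refine ⟨μ₁.symm, c₂⁻¹ * c₁, by simp [hc₁, hc₂], ?_⟩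
    intro v
    simp only [LinearEquiv.symm_symm]
    -- τ₁' (μ₁⁻¹ v) = c₁ • μ₂⁻¹ (τ₁ v)
    have e1 : τ₁' (μ₁.symm v) = c₁ • μ₂.symm (τ₁ v) := by
      apply μ₂.injective
      rw [hv₁, map_smul, LinearEquiv.apply_symm_apply]
    -- τ₂'⁻¹ (μ₂⁻¹ w) = c₂⁻¹ • μ₁⁻¹ (τ₂⁻¹ w)
    have e2 : ∀ w, τ₂'.symm (μ₂.symm w) = c₂⁻¹ • μ₁.symm (τ₂.symm w) := by
      intro w
      have h5 : μ₂ (τ₂' (μ₁.symm (τ₂.symm w))) = c₂ • w := by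
        rw [hv₂, LinearEquiv.apply_symm_apply]
      have h6 : τ₂' (μ₁.symm (τ₂.symm w)) = c₂ • μ₂.symm w := by
        apply μ₂.injective; rw [h5, map_smul, LinearEquiv.apply_symm_apply]
      have h7 : μ₁.symm (τ₂.symm w) = c₂ • τ₂'.symm (μ₂.symm w) := by
        apply τ₂'.injective; rw [h6, map_smul, LinearEquiv.apply_symm_apply]
      rw [h7, smul_smul, inv_mul_cancel₀ hc₂, one_smul]
    rw [e1, map_smul, e2, map_smul, map_smul,
      LinearEquiv.apply_symm_apply, smul_smul, mul_comm]
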